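/- Let S be a numerical semigroup with Frobenius number g, and let x < y be positive integers such that: x, y ∉ S; every integer w with x < w < y belongs to S; and M_x and M_y are not divisorial. Let Λ, Δ be nonempty subsets of Q_y(S) that are antichains with respect to inclusion, and suppose M_y ∉ Λ. Then: (a) ⋆_{Λ ∪ {M_x}} ≠ ⋆_Δ; (b) if Λ ≠ Δ, then ⋆_{Λ ∪ {M_x}} ≠ ⋆_{Δ ∪ {M_x}}. -/
import Mathlib


/-- A numerical semigroup: a subset of ℕ containing 0, closed under addition,
with finite complement. -/
structure NumSgp where
  carrier : Set ℕ
  zero_mem : 0 ∈ carrier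
  add_mem : ∀ a ∈ carrier, ∀ b ∈ carrier, a + b ∈ carrier
  cofinite : carrierᶜ.Finite

/-- The copy of `S` inside ℤ. -/
def natS (S : NumSgp) : Set ℤ := (fun n : ℕ => (n : ℤ)) '' S.carrier

/-- A fractional ideal of `S`: a nonempty subset of ℤ, bounded below, with `I + S ⊆ I`. -/
def IsFracIdeal (S : NumSgp) (I : Set ℤ) : Prop :=
  I.Nonempty ∧ BddBelow I ∧ ∀ i ∈ I, ∀ s ∈ natS S, i + s ∈ I

/-- `(I − J) = {x ∈ ℤ : x + J ⊆ I}`. -/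
def idealSub (I J : Set ℤ) : Set ℤ := {x : ℤ | ∀ j ∈ J, x + j ∈ I}

/-- `F₀(S)`: fractional ideals `I` with `S ⊆ I ⊆ ℕ` (hence with minimal element 0). -/
def F0 (S : NumSgp) : Set (Set ℤ) :=
  {I | IsFracIdeal S I ∧ natS S ⊆ I ∧ I ⊆ {x : ℤ | 0 ≤ x}}

/-- The `v`-operation (divisorial closure): `I ↦ (S − (S − I))`. -/
def vOp (S : NumSgp) (I : Set ℤ) : Set ℤ := idealSub (natS S) (idealSub (natS S) I)

/-- An ideal is divisorial if it is `v`-closed. -/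
def Divisorial (S : NumSgp) (I : Set ℤ) : Prop := vOp S I = I

/-- `G₀(S)`: the nondivisorial ideals in `F₀(S)`. -/
def G0 (S : NumSgp) : Set (Set ℤ) := {I | I ∈ F0 S ∧ ¬ Divisorial S I}

/-- The action of the star operation `⋆_I` generated by `I`:
`J ↦ J^{⋆_I} = J^v ∩ (I − (I − J))`. -/
def starI (S : NumSgp) (I J : Set ℤ) : Set ℤ := vOp S J ∩ idealSub I (idealSub I J)

/-- The action of the star operation `⋆_Δ = inf_{I ∈ Δ} ⋆_I` generated by a set `Δ` of ideals:
`J ↦ J^{⋆_Δ} = J^v ∩ ⋂_{I ∈ Δ} (I − (I − J))`. -/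
def starD (S : NumSgp) (Δ : Set (Set ℤ)) (J : Set ℤ) : Set ℤ :=
  vOp S J ∩ ⋂ I ∈ Δ, idealSub I (idealSub I J)

/-- The ⋆-order: `I ≤⋆ J` iff `I` is `⋆_J`-closed. -/
def starle (S : NumSgp) (I J : Set ℤ) : Prop := starI S J I = I

/-- A star operation on `S`, given by its action on subsets of ℤ; it is normalized to be
the identity outside the fractional ideals, so that two star operations are equal iff they
agree on all fractional ideals. -/
structure StarOp (S : NumSgp) where
  toFun : Set ℤ → Set ℤ
  isFrac : ∀ I, IsFracIdeal S I → IsFracIdeal S (toFun I)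
  subset_star : ∀ I, IsFracIdeal S I → I ⊆ toFun I
  mono : ∀ I J, IsFracIdeal S I → IsFracIdeal S J → I ⊆ J → toFun I ⊆ toFun J
  idem : ∀ I, IsFracIdeal S I → toFun (toFun I) = toFun I
  transl : ∀ I, IsFracIdeal S I → ∀ a : ℤ,
    toFun ((fun x => a + x) '' I) = (fun x => a + x) '' toFun I
  star_S : toFun (natS S) = natS S
  default_eq : ∀ I, ¬ IsFracIdeal S I → toFun I = I

/-- The order on star operations: `s ≤ t` iff `I^s ⊆ I^t` for every fractional ideal `I`. -/
def StarOp.le {S : NumSgp} (s t : StarOp S) : Prop :=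
  ∀ I, IsFracIdeal S I → s.toFun I ⊆ t.toFun I

/-- A star operation `s` is prime if whenever `s ≥ t ∧ u` (the infimum of two star operations
being given by `I ↦ I^t ∩ I^u`), then `s ≥ t` or `s ≥ u`. -/
def StarOp.IsPrime {S : NumSgp} (s : StarOp S) : Prop :=
  ∀ t u : StarOp S,
    (∀ I, IsFracIdeal S I → t.toFun I ∩ u.toFun I ⊆ s.toFun I) →
    t.le s ∨ u.le s

/-- `I ∈ F₀(S)` is an atom if the star operation `⋆_I` is prime. -/
def AtomIdeal (S : NumSgp) (I : Set ℤ) : Prop :=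
  I ∈ F0 S ∧ ∀ t u : StarOp S,
    (∀ J, IsFracIdeal S J → t.toFun J ∩ u.toFun J ⊆ starI S I J) →
    (∀ J, IsFracIdeal S J → t.toFun J ⊆ starI S I J) ∨
    (∀ J, IsFracIdeal S J → u.toFun J ⊆ starI S I J)

/-- `M_a = {x ∈ ℕ : a − x ∉ S}`, the biggest ideal in `F₀(S)` not containing `a`. -/
def Mdual (S : NumSgp) (a : ℕ) : Set ℤ := {x : ℤ | 0 ≤ x ∧ ((a : ℤ) - x) ∉ natS S}

/-- `Q_a(S) = {I ∈ F₀(S) : a = sup(ℕ \ I), a ∈ I^v}`. -/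
def Qa (S : NumSgp) (a : ℕ) : Set (Set ℤ) :=
  {I | I ∈ F0 S ∧ (a : ℤ) ∉ I ∧ (∀ x : ℤ, (a : ℤ) < x → x ∈ I) ∧ (a : ℤ) ∈ vOp S I}

/-- The number of antichains (with respect to inclusion) of a family of ideals. -/
noncomputable def numInclAnti (Q : Set (Set ℤ)) : ℕ :=
  Set.ncard {Δ : Set (Set ℤ) | Δ ⊆ Q ∧ IsAntichain (· ⊆ ·) Δ}

/-- The `n`-th Dedekind number: the number of antichains of the power set of an
`n`-element set, ordered by inclusion. -/
noncomputable def dedekind (n : ℕ) : ℕ :=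
  Nat.card {A : Set (Set (Fin n)) // IsAntichain (· ⊆ ·) A}

/-- `T(S) = (S − M_S) \ S`. -/
def Tset (S : NumSgp) : Set ℤ :=
  idealSub (natS S) ((fun n : ℕ => (n : ℤ)) '' (S.carrier \ {0})) \ natS S

/-- The type `t(S) = |T(S)|`. -/
noncomputable def typeNum (S : NumSgp) : ℕ := (Tset S).ncard

/-- The Frobenius number `g(S)`: the largest integer not in `S`. -/
noncomputable def frob (S : NumSgp) : ℕ := sSup S.carrierᶜ

/-- The multiplicity `μ(S)`: the smallest nonzero element of `S`. -/
noncomputable def multNum (S : NumSgp) : ℕ := sInf (S.carrier \ {0})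

/-- The degree of singularity `δ(S) = |ℕ \ S|`. -/
noncomputable def deltaNum (S : NumSgp) : ℕ := S.carrierᶜ.ncard

/-- `S` is symmetric if `g(S) − a ∈ S` for every `a ∈ ℕ \ S`. -/
def IsSymmetricSgp (S : NumSgp) : Prop :=
  ∀ a : ℕ, a ∉ S.carrier → ((frob S : ℤ) - (a : ℤ)) ∈ natS S

section MixedAux

variable (S : NumSgp)

lemma mem_natS {n : ℕ} : (n : ℤ) ∈ natS S ↔ n ∈ S.carrier := by
  constructor
  · rintro ⟨m, hm, hmn⟩
    have hmn' : (m : ℤ) = (n : ℤ) := hmn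
    have : m = n := by exact_mod_cast hmn'
    rwa [this] at hm
  · intro h; exact ⟨n, h, rfl⟩

lemma natS_nonneg {z : ℤ} (hz : z ∈ natS S) : 0 ≤ z := by
  rcases hz with ⟨n, _, rfl⟩; exact Int.natCast_nonneg n

lemma natS_zero : (0 : ℤ) ∈ natS S := ⟨0, S.zero_mem, rfl⟩

lemma natS_add {a b : ℤ} (ha : a ∈ natS S) (hb : b ∈ natS S) : a + b ∈ natS S := by
  rcases ha with ⟨m, hm, rfl⟩; rcases hb with ⟨n, hn, rfl⟩
  exact ⟨m + n, S.add_mem m hm n hn, by push_cast; ring⟩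

lemma exists_gmax (a : ℕ) (ha : a ∉ S.carrier) :
    ∃ g : ℕ, g ∉ S.carrier ∧ ∀ z : ℤ, (g : ℤ) < z → z ∈ natS S := by
  classical
  set F := S.cofinite.toFinset with hF
  have hFne : F.Nonempty := ⟨a, by simp [hF, Set.Finite.mem_toFinset, ha]⟩
  refine ⟨F.max' hFne, ?_, ?_⟩
  · have := F.max'_mem hFne
    simpa [hF, Set.Finite.mem_toFinset] using this
  · intro z hz
    have hz0 : 0 ≤ z := le_trans (Int.natCast_nonneg _) hz.le
    have hzt : z.toNat ∈ S.carrier := by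
      by_contra h
      have h1 : z.toNat ∈ F := by simp [hF, Set.Finite.mem_toFinset, h]
      have h2 := F.le_max' _ h1
      omega
    exact ⟨z.toNat, hzt, by show ((z.toNat : ℕ) : ℤ) = z; omega⟩

lemma subset_vOp {I : Set ℤ} : I ⊆ vOp S I := by
  intro z hz t ht
  have := ht z hz
  rwa [add_comm] at this

lemma vOp_add_natS {I : Set ℤ} {z s : ℤ} (hz : z ∈ vOp S I) (hs : s ∈ natS S) :
    z + s ∈ vOp S I := by
  intro t ht
  have h1 := hz t ht
  have h2 := natS_add S h1 hs
  have h3 : z + t + s = z + s + t := by ring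
  rwa [h3] at h2

lemma vOp_nonneg (a : ℕ) (ha : a ∉ S.carrier) {I : Set ℤ}
    (hI : I ⊆ {w : ℤ | 0 ≤ w}) : vOp S I ⊆ {w : ℤ | 0 ≤ w} := by
  obtain ⟨g, hg, hgt⟩ := exists_gmax S a ha
  intro z hz
  simp only [Set.mem_setOf_eq]
  by_contra hneg
  push_neg at hneg
  have ht : ((g : ℤ) - z) ∈ idealSub (natS S) I := by
    intro j hj
    apply hgt
    have := hI hj
    simp only [Set.mem_setOf_eq] at this
    omega
  have h1 := hz _ ht
  have h2 : z + ((g : ℤ) - z) = (g : ℤ) := by ring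
  rw [h2] at h1
  exact hg ((mem_natS S).mp h1)

lemma natS_subset_Mdual {a : ℕ} (ha : a ∉ S.carrier) : natS S ⊆ Mdual S a := by
  intro s hs
  refine ⟨natS_nonneg S hs, fun hc => ha ?_⟩
  have h1 := natS_add S hs hc
  have h2 : s + ((a : ℤ) - s) = (a : ℤ) := by ring
  rw [h2] at h1
  exact (mem_natS S).mp h1

lemma zero_mem_Mdual {a : ℕ} (ha : a ∉ S.carrier) : (0 : ℤ) ∈ Mdual S a :=
  natS_subset_Mdual S ha (natS_zero S)

lemma Mdual_nonneg {a : ℕ} : Mdual S a ⊆ {w : ℤ | 0 ≤ w} := fun _ hm => hm.1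

lemma Mdual_frac {a : ℕ} (ha : a ∉ S.carrier) : IsFracIdeal S (Mdual S a) := by
  refine ⟨⟨0, zero_mem_Mdual S ha⟩, ⟨0, fun m hm => hm.1⟩, ?_⟩
  rintro i ⟨hi0, hi⟩ s hs
  have hs0 := natS_nonneg S hs
  refine ⟨by omega, fun hc => hi ?_⟩
  have h1 := natS_add S hc hs
  have h2 : (a : ℤ) - (i + s) + s = (a : ℤ) - i := by ring
  rwa [h2] at h1

lemma mem_Mdual_of_lt {a : ℕ} {z : ℤ} (hz : (a : ℤ) < z) : z ∈ Mdual S a := by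
  refine ⟨by omega, fun hc => ?_⟩
  have := natS_nonneg S hc
  omega

lemma subset_Mdual_of_not_mem {a : ℕ} {J : Set ℤ} (hJ : IsFracIdeal S J)
    (hJn : J ⊆ {w : ℤ | 0 ≤ w}) (haJ : (a : ℤ) ∉ J) : J ⊆ Mdual S a := by
  intro j hj
  refine ⟨hJn hj, fun hc => haJ ?_⟩
  have h1 := hJ.2.2 j hj _ hc
  have h2 : j + ((a : ℤ) - j) = (a : ℤ) := by ring
  rwa [h2] at h1

lemma Qa_subset_Mdual {a : ℕ} {J : Set ℤ} (hJ : J ∈ Qa S a) : J ⊆ Mdual S a :=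
  subset_Mdual_of_not_mem S hJ.1.1 hJ.1.2.2 hJ.2.1

lemma subset_term {I J : Set ℤ} : I ⊆ idealSub J (idealSub J I) := by
  intro z hz t ht
  have := ht z hz
  rwa [add_comm] at this

lemma term_subset_self {I : Set ℤ} : idealSub I (idealSub I I) ⊆ I := by
  intro z hz
  have h0 : (0 : ℤ) ∈ idealSub I I := fun i hi => by simpa using hi
  have := hz 0 h0
  simpa using this

lemma starD_self {Γ : Set (Set ℤ)} {I : Set ℤ} (hI : I ∈ Γ) : starD S Γ I = I := by
  apply Set.Subset.antisymm
  · intro z hz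
    exact term_subset_self (Set.mem_iInter₂.mp hz.2 I hI)
  · intro z hz
    exact ⟨subset_vOp S hz, Set.mem_iInter₂.mpr fun J _ => subset_term hz⟩

lemma y_mem_Mx_term (x y : ℕ) (hxy : x < y) {I : Set ℤ} (h0 : (0 : ℤ) ∈ I) :
    (y : ℤ) ∈ idealSub (Mdual S x) (idealSub (Mdual S x) I) := by
  intro t ht
  have htM : t ∈ Mdual S x := by
    have := ht 0 h0
    simpa using this
  have ht0 : 0 ≤ t := htM.1
  refine ⟨by omega, fun hc => ?_⟩
  have := natS_nonneg S hc
  omega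

lemma y_mem_term_of_not_subset {y : ℕ} {I J : Set ℤ} (hJ : J ∈ Qa S y) (h0 : (0 : ℤ) ∈ I)
    (hns : ¬ I ⊆ J) : (y : ℤ) ∈ idealSub J (idealSub J I) := by
  intro t ht
  have htJ : t ∈ J := by
    have := ht 0 h0
    simpa using this
  have ht0 : 0 ≤ t := hJ.1.2.2 htJ
  rcases eq_or_lt_of_le ht0 with h | h
  · exfalso
    apply hns
    intro i hi
    have := ht i hi
    rwa [← h, zero_add] at this
  · exact hJ.2.2.1 _ (by omega)

lemma x_mem_term (x y : ℕ) (hxy : x < y) (hxS : x ∉ S.carrier)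
    (hbetween : ∀ w : ℕ, x < w → w < y → w ∈ S.carrier)
    {J : Set ℤ} (hJ : J ∈ Qa S y) (hJne : J ≠ Mdual S y) :
    (x : ℤ) ∈ idealSub J (idealSub J (Mdual S x)) := by
  intro t ht
  have h0M : (0 : ℤ) ∈ Mdual S x := zero_mem_Mdual S hxS
  have htJ : t ∈ J := by
    have := ht 0 h0M
    simpa using this
  have ht0 : 0 ≤ t := hJ.1.2.2 htJ
  rcases lt_trichotomy ((x : ℤ) + t) (y : ℤ) with h | h | h
  · rcases eq_or_lt_of_le ht0 with h0 | h0
    · -- t = 0 : impossible since y ∈ M_x \ J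
      exfalso
      have hyM : (y : ℤ) ∈ Mdual S x := mem_Mdual_of_lt S (by exact_mod_cast hxy)
      have := ht _ hyM
      rw [← h0, zero_add] at this
      exact hJ.2.1 this
    · -- 0 < t : x + t is a natural strictly between x and y
      have hw : ∃ w : ℕ, (w : ℤ) = (x : ℤ) + t ∧ x < w ∧ w < y :=
        ⟨((x : ℤ) + t).toNat, by omega, by omega, by omega⟩
      obtain ⟨w, hw1, hw2, hw3⟩ := hw
      have : (w : ℤ) ∈ natS S := (mem_natS S).mpr (hbetween w hw2 hw3)
      rw [hw1] at this
      exact hJ.1.2.1 this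
  · -- x + t = y : then J = M_y, contradiction
    exfalso
    apply hJne
    apply Set.Subset.antisymm (Qa_subset_Mdual S hJ)
    rintro z ⟨hz0, hz⟩
    rcases eq_or_lt_of_le hz0 with h0 | h0
    · rw [← h0]; exact hJ.1.2.1 (natS_zero S)
    · by_cases hzc : z < (y : ℤ) - (x : ℤ)
      · exfalso
        apply hz
        have hw : ∃ w : ℕ, (w : ℤ) = (y : ℤ) - z ∧ x < w ∧ w < y :=
          ⟨((y : ℤ) - z).toNat, by omega, by omega, by omega⟩
        obtain ⟨w, hw1, hw2, hw3⟩ := hw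
        rw [← hw1]
        exact (mem_natS S).mpr (hbetween w hw2 hw3)
      · push_neg at hzc
        have hm : z - t ∈ Mdual S x := by
          refine ⟨by omega, fun hc => hz ?_⟩
          have h2 : (x : ℤ) - (z - t) = (y : ℤ) - z := by omega
          rwa [h2] at hc
        have h1 := ht _ hm
        have h3 : t + (z - t) = z := by ring
        rwa [h3] at h1
  · exact hJ.2.2.1 _ h

lemma x_mem_vOp_Mx (a : ℕ) (haS : a ∉ S.carrier) (hnd : ¬ Divisorial S (Mdual S a)) :
    (a : ℤ) ∈ vOp S (Mdual S a) := by
  have hsub : Mdual S a ⊆ vOp S (Mdual S a) := subset_vOp S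
  have hnn : vOp S (Mdual S a) ⊆ {w : ℤ | 0 ≤ w} := vOp_nonneg S a haS (Mdual_nonneg S)
  have hex : ∃ z, z ∈ vOp S (Mdual S a) ∧ z ∉ Mdual S a := by
    by_contra h
    push_neg at h
    exact hnd (Set.Subset.antisymm (fun z hz => h z hz) hsub)
  obtain ⟨z, hz, hzn⟩ := hex
  have hz0 : 0 ≤ z := hnn hz
  have hc : (a : ℤ) - z ∈ natS S := by
    by_contra h
    exact hzn ⟨hz0, h⟩
  have h2 := vOp_add_natS S hz hc
  have h3 : z + ((a : ℤ) - z) = (a : ℤ) := by ring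
  rwa [h3] at h2

lemma antichain_eq {Λ Δ : Set (Set ℤ)} (hΛa : IsAntichain (· ⊆ ·) Λ)
    (hΔa : IsAntichain (· ⊆ ·) Δ)
    (h1 : ∀ I ∈ Λ, ∃ J ∈ Δ, I ⊆ J) (h2 : ∀ J ∈ Δ, ∃ I ∈ Λ, J ⊆ I) : Λ = Δ := by
  have key : ∀ (A B : Set (Set ℤ)), IsAntichain (· ⊆ ·) A →
      (∀ I ∈ A, ∃ J ∈ B, I ⊆ J) → (∀ J ∈ B, ∃ I ∈ A, J ⊆ I) → A ⊆ B := by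
    intro A B hA hAB hBA I hI
    obtain ⟨J, hJ, hIJ⟩ := hAB I hI
    obtain ⟨I', hI', hJI⟩ := hBA J hJ
    have hII' : I ⊆ I' := hIJ.trans hJI
    have heq : I = I' := by
      by_contra hne
      exact hA hI hI' hne hII'
    have heq2 : I = J := Set.Subset.antisymm hIJ (by rw [heq]; exact hJI)
    rw [heq2]; exact hJ
  exact Set.Subset.antisymm (key Λ Δ hΛa h1 h2) (key Δ Λ hΔa h2 h1)

end MixedAux

/-- Mixed antichains: adjoining `M_x` to antichains of `Q_y(S)` for consecutive gaps `x < y`. -/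
theorem mixed_antichains (S : NumSgp) (x y : ℕ) (hx0 : 0 < x) (hxy : x < y)
    (hxS : x ∉ S.carrier) (hyS : y ∉ S.carrier)
    (hbetween : ∀ w : ℕ, x < w → w < y → w ∈ S.carrier)
    (hMx : ¬ Divisorial S (Mdual S x)) (hMy : ¬ Divisorial S (Mdual S y))
    (Λ Δ : Set (Set ℤ)) (hΛ : Λ ⊆ Qa S y) (hΔ : Δ ⊆ Qa S y)
    (hΛne : Λ.Nonempty) (hΔne : Δ.Nonempty)
    (hΛa : IsAntichain (· ⊆ ·) Λ) (hΔa : IsAntichain (· ⊆ ·) Δ)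
    (hMyΛ : Mdual S y ∉ Λ) :
    -- (a) `⋆_{Λ ∪ {M_x}} ≠ ⋆_Δ`
    (∃ K : Set ℤ, IsFracIdeal S K ∧ starD S (Λ ∪ {Mdual S x}) K ≠ starD S Δ K) ∧
    -- (b) if `Λ ≠ Δ` then `⋆_{Λ ∪ {M_x}} ≠ ⋆_{Δ ∪ {M_x}}`
    (Λ ≠ Δ → ∃ K : Set ℤ, IsFracIdeal S K ∧
      starD S (Λ ∪ {Mdual S x}) K ≠ starD S (Δ ∪ {Mdual S x}) K) := by
  classical
  -- helper facts
  have hxMx : (x : ℤ) ∉ Mdual S x := by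
    rintro ⟨-, h⟩
    apply h
    rw [sub_self]
    exact natS_zero S
  constructor
  · -- part (a)
    by_cases hc1 : ∀ I ∈ Λ, ∃ J ∈ Δ, I ⊆ J
    · by_cases hc2 : ∀ J ∈ Δ, ∃ I ∈ Λ, J ⊆ I
      · -- Λ = Δ : use K = M_x
        have hΛΔ : Λ = Δ := antichain_eq hΛa hΔa hc1 hc2
        subst hΛΔ
        refine ⟨Mdual S x, Mdual_frac S hxS, fun heq => ?_⟩
        have hMl : starD S (Λ ∪ {Mdual S x}) (Mdual S x) = Mdual S x :=
          starD_self S (Set.mem_union_right _ rfl)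
        have hxstar : (x : ℤ) ∈ starD S Λ (Mdual S x) := by
          refine ⟨x_mem_vOp_Mx S x hxS hMx, Set.mem_iInter₂.mpr fun J hJ => ?_⟩
          exact x_mem_term S x y hxy hxS hbetween (hΛ hJ) (fun he => hMyΛ (he ▸ hJ))
        apply hxMx
        rw [← hMl, heq]
        exact hxstar
      · -- some J ∈ Δ not below any element of Λ : use K = J
        push_neg at hc2
        obtain ⟨J, hJΔ, hJn⟩ := hc2
        have hJQ := hΔ hJΔ
        refine ⟨J, hJQ.1.1, fun heq => ?_⟩
        have hJl : starD S Δ J = J := starD_self S hJΔ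
        have h0J : (0 : ℤ) ∈ J := hJQ.1.2.1 (natS_zero S)
        have hy : (y : ℤ) ∈ starD S (Λ ∪ {Mdual S x}) J := by
          refine ⟨hJQ.2.2.2, Set.mem_iInter₂.mpr fun K hK => ?_⟩
          rcases hK with hK | hK
          · exact y_mem_term_of_not_subset S (hΛ hK) h0J (hJn K hK)
          · rw [Set.mem_singleton_iff] at hK
            subst hK
            exact y_mem_Mx_term S x y hxy h0J
        apply hJQ.2.1
        rw [← hJl, ← heq]
        exact hy
    · -- some I ∈ Λ not below any element of Δ : use K = I
      push_neg at hc1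
      obtain ⟨I, hIΛ, hIn⟩ := hc1
      have hIQ := hΛ hIΛ
      refine ⟨I, hIQ.1.1, fun heq => ?_⟩
      have hIl : starD S (Λ ∪ {Mdual S x}) I = I := starD_self S (Set.mem_union_left _ hIΛ)
      have h0I : (0 : ℤ) ∈ I := hIQ.1.2.1 (natS_zero S)
      have hy : (y : ℤ) ∈ starD S Δ I := by
        refine ⟨hIQ.2.2.2, Set.mem_iInter₂.mpr fun J hJ => ?_⟩
        exact y_mem_term_of_not_subset S (hΔ hJ) h0I (hIn J hJ)
      apply hIQ.2.1
      rw [← hIl, heq]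
      exact hy
  · -- part (b)
    intro hne
    by_cases hc1 : ∀ I ∈ Λ, ∃ J ∈ Δ, I ⊆ J
    · have hc2 : ¬ ∀ J ∈ Δ, ∃ I ∈ Λ, J ⊆ I := fun h => hne (antichain_eq hΛa hΔa hc1 h)
      push_neg at hc2
      obtain ⟨J, hJΔ, hJn⟩ := hc2
      have hJQ := hΔ hJΔ
      refine ⟨J, hJQ.1.1, fun heq => ?_⟩
      have hJl : starD S (Δ ∪ {Mdual S x}) J = J := starD_self S (Set.mem_union_left _ hJΔ)
      have h0J : (0 : ℤ) ∈ J := hJQ.1.2.1 (natS_zero S)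
      have hy : (y : ℤ) ∈ starD S (Λ ∪ {Mdual S x}) J := by
        refine ⟨hJQ.2.2.2, Set.mem_iInter₂.mpr fun K hK => ?_⟩
        rcases hK with hK | hK
        · exact y_mem_term_of_not_subset S (hΛ hK) h0J (hJn K hK)
        · rw [Set.mem_singleton_iff] at hK
          subst hK
          exact y_mem_Mx_term S x y hxy h0J
      apply hJQ.2.1
      rw [← hJl, ← heq]
      exact hy
    · push_neg at hc1
      obtain ⟨I, hIΛ, hIn⟩ := hc1
      have hIQ := hΛ hIΛ
      refine ⟨I, hIQ.1.1, fun heq => ?_⟩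
      have hIl : starD S (Λ ∪ {Mdual S x}) I = I := starD_self S (Set.mem_union_left _ hIΛ)
      have h0I : (0 : ℤ) ∈ I := hIQ.1.2.1 (natS_zero S)
      have hy : (y : ℤ) ∈ starD S (Δ ∪ {Mdual S x}) I := by
        refine ⟨hIQ.2.2.2, Set.mem_iInter₂.mpr fun K hK => ?_⟩
        rcases hK with hK | hK
        · exact y_mem_term_of_not_subset S (hΔ hK) h0I (hIn K hK)
        · rw [Set.mem_singleton_iff] at hK
          subst hK
          exact y_mem_Mx_term S x y hxy h0I
      apply hIQ.2.1
      rw [← hIl, heq]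
      exact hy
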